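/- Let 0 < p < 1/2, h(x) = −x log₂ x − (1−x) log₂(1−x) with inverse h^{-1} taking values in [0,1/2], D(x‖y) = x log₂(x/y) + (1−x) log₂((1−x)/(1−y)), and δ_GV(R) = h^{-1}(1−R). Then for every rate R with 0 < R < 1 − h(p), the reliability function of the BSC satisfies E(R, p) ≤ D(δ_GV(R)‖p). -/
import Mathlib


open Finset Filter

/-- The binary entropy function `h(x) = −x log₂ x − (1−x) log₂(1−x)`. -/
noncomputable def binEnt (x : ℝ) : ℝ :=
  -x * Real.logb 2 x - (1 - x) * Real.logb 2 (1 - x)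

/-- The inverse of the binary entropy function taking values in `[0, 1/2]`. -/
noncomputable def binEntInv (y : ℝ) : ℝ :=
  sInf {x : ℝ | x ∈ Set.Icc (0 : ℝ) (1 / 2) ∧ binEnt x = y}

/-- The Gilbert–Varshamov relative distance `δ_GV(R) = h⁻¹(1−R)`. -/
noncomputable def deltaGV (R : ℝ) : ℝ := binEntInv (1 - R)

/-- The binary Kullback–Leibler divergence
`D(x‖y) = x log₂(x/y) + (1−x) log₂((1−x)/(1−y))`. -/
noncomputable def binKL (x y : ℝ) : ℝ :=
  x * Real.logb 2 (x / y) + (1 - x) * Real.logb 2 ((1 - x) / (1 - y))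

/-- BSC transition probabilities `P(y|x) = p^{d(x,y)} (1-p)^{n-d(x,y)}`. -/
noncomputable def bscProb (n : ℕ) (p : ℝ) (x y : Fin n → Bool) : ℝ :=
  p ^ hammingDist x y * (1 - p) ^ (n - hammingDist x y)

/-- The (average) maximum-likelihood decoding error probability of a code `C`:
the minimum over all decoding maps `dec : X → C` of
`(1/|C|) ∑_{x ∈ C} ∑_{y : dec y ≠ x} P(y|x)`. -/
noncomputable def PeCode (n : ℕ) (p : ℝ) (C : Finset (Fin n → Bool)) : ℝ :=
  sInf {e : ℝ | ∃ dec : (Fin n → Bool) → (Fin n → Bool), (∀ y, dec y ∈ C) ∧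
    e = (C.card : ℝ)⁻¹ * ∑ x ∈ C,
      ∑ y ∈ Finset.univ.filter (fun y => dec y ≠ x), bscProb n p x y}

/-- The reliability function of the BSC:
`E(R,p) = limsup_{n→∞} max_{C ⊆ {0,1}ⁿ, |C| ≥ 2^{Rn}} (1/n) log₂ (1/P_e(C,p))`. -/
noncomputable def reliability (p R : ℝ) : ℝ :=
  limsup (fun n : ℕ =>
    sSup {e : ℝ | ∃ C : Finset (Fin n → Bool),
      (2 : ℝ) ^ (R * n) ≤ (C.card : ℝ) ∧
      e = (n : ℝ)⁻¹ * Real.logb 2 (1 / PeCode n p C)}) atTop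

open Real Topology
set_option maxHeartbeats 1000000

/-- term of the binomial expansion -/
def binTerm (n r j : ℕ) : ℕ := n.choose j * r^j * (n-r)^(n-j)

lemma binTerm_identity (n r j : ℕ) (hj : j < n) :
    (j+1) * (n-r) * binTerm n r (j+1) = (n-j) * r * binTerm n r j := by
  unfold binTerm
  have h1 : n.choose (j + 1) * (j + 1) = n.choose j * (n - j) := Nat.choose_succ_right_eq n j
  have h2 : (n-r) * (n-r)^(n-(j+1)) = (n-r)^(n-j) := by
    rw [← pow_succ']
    congr 1
    omega
  calc (j+1) * (n-r) * (n.choose (j+1) * r^(j+1) * (n-r)^(n-(j+1)))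
      = (n.choose (j+1) * (j+1)) * r^(j+1) * ((n-r) * (n-r)^(n-(j+1))) := by ring
    _ = (n.choose j * (n-j)) * r^(j+1) * (n-r)^(n-j) := by rw [h1, h2]
    _ = (n-j) * r * (n.choose j * r^j * (n-r)^(n-j)) := by rw [pow_succ]; ring

lemma binTerm_step_up (n r j : ℕ) (hj : j + 1 ≤ r) (hrn : r < n) :
    binTerm n r j ≤ binTerm n r (j+1) := by
  have hjn : j < n := by omega
  have hA : 0 < (j+1) * (n-r) := by
    have : 0 < n - r := by omega
    positivity
  have hcoef : (j+1) * (n-r) ≤ (n-j) * r := by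
    zify [le_of_lt hrn, le_of_lt hjn]
    nlinarith [hj, hrn, hjn]
  have hid := binTerm_identity n r j hjn
  have : (j+1) * (n-r) * binTerm n r j ≤ (j+1) * (n-r) * binTerm n r (j+1) := by
    rw [hid]
    exact Nat.mul_le_mul_right _ hcoef
  exact Nat.le_of_mul_le_mul_left this hA

lemma binTerm_step_down (n r j : ℕ) (hj : r ≤ j) (hrn : r < n) :
    binTerm n r (j+1) ≤ binTerm n r j := by
  by_cases hjn : j < n
  · have hA : 0 < (j+1) * (n-r) := by
      have : 0 < n - r := by omega
      positivity
    have hcoef : (n-j) * r ≤ (j+1) * (n-r) := by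
      zify [le_of_lt hrn, le_of_lt hjn]
      nlinarith [hj, hrn, hjn]
    have hid := binTerm_identity n r j hjn
    have h3 : (j+1) * (n-r) * binTerm n r (j+1) ≤ (j+1) * (n-r) * binTerm n r j := by
      rw [hid]
      exact Nat.mul_le_mul_right _ hcoef
    exact Nat.le_of_mul_le_mul_left h3 hA
  · have : n.choose (j+1) = 0 := Nat.choose_eq_zero_of_lt (by omega)
    unfold binTerm
    rw [this]
    simp

lemma binTerm_le_max (n r : ℕ) (hr : 0 < r) (hrn : r < n) (j : ℕ) :
    binTerm n r j ≤ binTerm n r r := by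
  rcases le_or_gt j r with h | h
  · -- j ≤ r : go up
    have key : ∀ k, binTerm n r (r - k) ≤ binTerm n r r := by
      intro k
      induction k with
      | zero => simp
      | succ k ih =>
        rcases le_or_gt (k+1) r with hk | hk
        · have heq : r - (k+1) + 1 = r - k := by omega
          have hstep := binTerm_step_up n r (r - (k+1)) (by omega) hrn
          rw [heq] at hstep
          exact le_trans hstep ih
        · have : r - (k+1) = r - k := by omega
          rw [this]; exact ih
    have : j = r - (r - j) := by omega
    rw [this]; exact key (r - j)
  · have key : ∀ k, binTerm n r (r + k) ≤ binTerm n r r := by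
      intro k
      induction k with
      | zero => simp
      | succ k ih =>
        have : r + (k+1) = (r + k) + 1 := by omega
        rw [this]
        exact le_trans (binTerm_step_down n r (r+k) (by omega) hrn) ih
    have : j = r + (j - r) := by omega
    rw [this]; exact key (j - r)

lemma pow_le_binTerm (n r : ℕ) (hr : 0 < r) (hrn : r < n) :
    n ^ n ≤ (n+1) * binTerm n r r := by
  have expand : n ^ n = ∑ j ∈ Finset.range (n+1), r^j * (n-r)^(n-j) * n.choose j := by
    have : r + (n - r) = n := by omega
    calc n ^ n = (r + (n-r))^n := by rw [this]
      _ = _ := add_pow r (n-r) n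
  have hb : ∀ j ∈ Finset.range (n+1), r^j * (n-r)^(n-j) * n.choose j ≤ binTerm n r r := by
    intro j _
    calc r^j * (n-r)^(n-j) * n.choose j = binTerm n r j := by unfold binTerm; ring
      _ ≤ binTerm n r r := binTerm_le_max n r hr hrn j
  calc n^n = ∑ j ∈ Finset.range (n+1), r^j * (n-r)^(n-j) * n.choose j := expand
    _ ≤ ∑ _j ∈ Finset.range (n+1), binTerm n r r := Finset.sum_le_sum hb
    _ = (n+1) * binTerm n r r := by simp [Finset.sum_const, Finset.card_range, mul_comm]

lemma bscProb_nonneg {n : ℕ} {p : ℝ} (hp0 : 0 ≤ p) (hp1 : p ≤ 1) (x y : Fin n → Bool) :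
    0 ≤ bscProb n p x y := by
  unfold bscProb
  have : (0:ℝ) ≤ 1 - p := by linarith
  positivity

lemma hammingDist_le (n : ℕ) (x y : Fin n → Bool) : hammingDist x y ≤ n := by
  simpa using hammingDist_le_card_fintype (x := x) (y := y)

lemma sphere_card (n : ℕ) (x : Fin n → Bool) (r : ℕ) :
    (univ.filter fun y : Fin n → Bool => hammingDist x y = r).card = n.choose r := by
  have hcard : n.choose r = (Finset.powersetCard r (univ : Finset (Fin n))).card := by
    rw [Finset.card_powersetCard, Finset.card_univ, Fintype.card_fin]
  rw [hcard]
  apply Finset.card_bij' (i := fun y _ => univ.filter fun i => x i ≠ y i)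
    (j := fun s _ => fun i => if i ∈ s then !x i else x i)
  · intro y hy
    simp only [Finset.mem_filter, Finset.mem_univ, true_and] at hy
    simp only [Finset.mem_powersetCard]
    exact ⟨Finset.subset_univ _, hy⟩
  · intro s hs
    simp only [Finset.mem_powersetCard] at hs
    simp only [Finset.mem_filter, Finset.mem_univ, true_and]
    have hset : (univ.filter fun i => x i ≠ (fun i => if i ∈ s then !x i else x i) i) = s := by
      ext i
      simp only [Finset.mem_filter, Finset.mem_univ, true_and]
      by_cases h : i ∈ s <;> simp [h]
    show hammingDist _ _ = r
    unfold hammingDist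
    rw [hset, hs.2]
  · intro y hy
    funext i
    simp only [Finset.mem_filter, Finset.mem_univ, true_and]
    by_cases h : x i = y i
    · simp [h]
    · simp only [h, if_pos, ne_eq, not_false_iff, if_true]
      revert h; cases x i <;> cases y i <;> simp
  · intro s hs
    ext i
    simp only [Finset.mem_filter, Finset.mem_univ, true_and]
    by_cases h : i ∈ s <;> simp [h]

lemma sum_bscProb (n : ℕ) (p : ℝ) (x : Fin n → Bool) :
    ∑ y ∈ univ, bscProb n p x y = 1 := by
  have hmap : ∀ y ∈ (univ : Finset (Fin n → Bool)), hammingDist x y ∈ Finset.range (n+1) := by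
    intro y _
    simp only [Finset.mem_range]
    exact Nat.lt_succ_of_le (hammingDist_le n x y)
  rw [← Finset.sum_fiberwise_of_maps_to hmap (fun y => bscProb n p x y)]
  have hinner : ∀ r ∈ Finset.range (n+1),
      ∑ y ∈ univ.filter (fun y => hammingDist x y = r), bscProb n p x y
        = (n.choose r : ℝ) * (p ^ r * (1-p)^(n-r)) := by
    intro r _
    rw [Finset.sum_congr rfl (fun y hy => ?_), Finset.sum_const, sphere_card, nsmul_eq_mul]
    simp only [Finset.mem_filter] at hy
    unfold bscProb
    rw [hy.2]
  rw [Finset.sum_congr rfl hinner]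
  have := add_pow p (1-p) n
  simp only [add_sub_cancel, one_pow] at this
  calc ∑ m ∈ Finset.range (n+1), (n.choose m : ℝ) * (p ^ m * (1-p)^(n-m))
      = ∑ m ∈ Finset.range (n+1), p ^ m * (1-p)^(n-m) * (n.choose m : ℝ) :=
        Finset.sum_congr rfl (fun m _ => by ring)
    _ = 1 := this.symm

lemma binEnt_eq (x : ℝ) : binEnt x = Real.binEntropy x / Real.log 2 := by
  unfold binEnt Real.binEntropy Real.logb
  rw [Real.log_inv, Real.log_inv]
  ring

lemma binEnt_continuous : Continuous binEnt := by
  have : binEnt = fun x => Real.binEntropy x / Real.log 2 := funext binEnt_eq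
  rw [this]
  exact Real.binEntropy_continuous.div_const _

lemma binEnt_strictMonoOn : StrictMonoOn binEnt (Set.Icc 0 (1/2)) := by
  have h2 : (0:ℝ) < Real.log 2 := Real.log_pos (by norm_num)
  intro a ha b hb hab
  rw [binEnt_eq, binEnt_eq, div_lt_div_iff_of_pos_right h2]
  have := Real.binEntropy_strictMonoOn (by simpa using ha) (by simpa using hb) hab
  exact this

lemma binEnt_zero : binEnt 0 = 0 := by simp [binEnt]

lemma binEnt_half : binEnt (1/2) = 1 := by
  rw [binEnt_eq]
  rw [show (1:ℝ)/2 = 2⁻¹ by norm_num, Real.binEntropy_two_inv]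
  field_simp

lemma binEnt_pos {x : ℝ} (h0 : 0 < x) (h1 : x < 1) : 0 < binEnt x := by
  rw [binEnt_eq]
  exact div_pos (Real.binEntropy_pos h0 h1) (Real.log_pos (by norm_num))

lemma deltaGV_spec {R : ℝ} (hR0 : 0 < R) (hR1 : R < 1) :
    deltaGV R ∈ Set.Icc (0:ℝ) (1/2) ∧ binEnt (deltaGV R) = 1 - R := by
  set T : Set ℝ := {x : ℝ | x ∈ Set.Icc (0 : ℝ) (1 / 2) ∧ binEnt x = 1 - R} with hT
  have hclosed : IsClosed T := by
    have : T = Set.Icc (0:ℝ) (1/2) ∩ binEnt ⁻¹' {1 - R} := rfl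
    rw [this]
    exact isClosed_Icc.inter (isClosed_singleton.preimage binEnt_continuous)
  have hne : T.Nonempty := by
    have hiv := intermediate_value_Icc (by norm_num : (0:ℝ) ≤ 1/2) binEnt_continuous.continuousOn
    have hmem : (1 - R) ∈ Set.Icc (binEnt 0) (binEnt (1/2)) := by
      rw [binEnt_zero, binEnt_half]
      constructor <;> linarith
    obtain ⟨x, hx, hxe⟩ := hiv hmem
    exact ⟨x, hx, hxe⟩
  have hbdd : BddBelow T := ⟨0, fun x hx => hx.1.1⟩
  have := hclosed.csInf_mem hne hbdd
  exact ⟨this.1, this.2⟩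

lemma binKL_expr {x p : ℝ} (hx0 : 0 < x) (hx1 : x < 1) (hp0 : 0 < p) (hp1 : p < 1) :
    binKL x p = -binEnt x - x * Real.logb 2 p - (1-x) * Real.logb 2 (1-p) := by
  unfold binKL binEnt
  rw [Real.logb_div (ne_of_gt hx0) (ne_of_gt hp0),
      Real.logb_div (by linarith) (by linarith)]
  ring

lemma binKL_continuousAt {p : ℝ} (hp0 : 0 < p) (hp1 : p < 1) {x : ℝ} (hx0 : 0 < x) (hx1 : x < 1) :
    ContinuousAt (fun t => binKL t p) x := by
  unfold binKL
  have c1 : ContinuousAt (fun t : ℝ => Real.logb 2 (t / p)) x := by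
    exact (Real.continuousAt_logb (by positivity)).comp (continuousAt_id.div_const p)
  have c2 : ContinuousAt (fun t : ℝ => Real.logb 2 ((1 - t) / (1 - p))) x := by
    have : ContinuousAt (fun t : ℝ => (1 - t) / (1 - p)) x :=
      (continuousAt_const.sub continuousAt_id).div_const _
    have hne : (1-x)/(1-p) ≠ 0 := ne_of_gt (div_pos (by linarith) (by linarith))
    show ContinuousAt ((Real.logb 2) ∘ (fun t : ℝ => (1 - t) / (1 - p))) x
    exact (Real.continuousAt_logb (by simpa using hne)).comp this
  exact (continuousAt_id.mul c1).add ((continuousAt_const.sub continuousAt_id).mul c2)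

section
variable {n : ℕ} {p : ℝ} {C : Finset (Fin n → Bool)}

lemma PeCode_set_nonempty (hC : C.Nonempty) :
    {e : ℝ | ∃ dec : (Fin n → Bool) → (Fin n → Bool), (∀ y, dec y ∈ C) ∧
      e = (C.card : ℝ)⁻¹ * ∑ x ∈ C,
        ∑ y ∈ Finset.univ.filter (fun y => dec y ≠ x), bscProb n p x y}.Nonempty := by
  obtain ⟨c, hc⟩ := hC
  exact ⟨_, fun _ => c, fun _ => hc, rfl⟩

lemma PeCode_set_bddBelow (hp0 : 0 ≤ p) (hp1 : p ≤ 1) :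
    BddBelow {e : ℝ | ∃ dec : (Fin n → Bool) → (Fin n → Bool), (∀ y, dec y ∈ C) ∧
      e = (C.card : ℝ)⁻¹ * ∑ x ∈ C,
        ∑ y ∈ Finset.univ.filter (fun y => dec y ≠ x), bscProb n p x y} := by
  refine ⟨0, fun e he => ?_⟩
  obtain ⟨dec, hdec, rfl⟩ := he
  have h1 : ∀ x ∈ C, 0 ≤ ∑ y ∈ Finset.univ.filter (fun y => dec y ≠ x), bscProb n p x y :=
    fun x _ => Finset.sum_nonneg fun y _ => bscProb_nonneg hp0 hp1 x y
  exact mul_nonneg (inv_nonneg.mpr (Nat.cast_nonneg _)) (Finset.sum_nonneg h1)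

lemma PeCode_nonneg (hp0 : 0 ≤ p) (hp1 : p ≤ 1) : 0 ≤ PeCode n p C :=
  Real.sInf_nonneg (by
    rintro e ⟨dec, hdec, rfl⟩
    have h1 : ∀ x ∈ C, 0 ≤ ∑ y ∈ Finset.univ.filter (fun y => dec y ≠ x), bscProb n p x y :=
      fun x _ => Finset.sum_nonneg fun y _ => bscProb_nonneg hp0 hp1 x y
    exact mul_nonneg (inv_nonneg.mpr (Nat.cast_nonneg _)) (Finset.sum_nonneg h1))

lemma PeCode_le_one (hp0 : 0 ≤ p) (hp1 : p ≤ 1) (hC : C.Nonempty) : PeCode n p C ≤ 1 := by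
  obtain ⟨c, hc⟩ := hC
  have hmem : ((C.card : ℝ)⁻¹ * ∑ x ∈ C,
      ∑ y ∈ Finset.univ.filter (fun y => (fun _ => c) y ≠ x), bscProb n p x y) ∈
      {e : ℝ | ∃ dec : (Fin n → Bool) → (Fin n → Bool), (∀ y, dec y ∈ C) ∧
      e = (C.card : ℝ)⁻¹ * ∑ x ∈ C,
        ∑ y ∈ Finset.univ.filter (fun y => dec y ≠ x), bscProb n p x y} :=
    ⟨fun _ => c, fun _ => hc, rfl⟩
  have hle := csInf_le (PeCode_set_bddBelow hp0 hp1) hmem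
  refine le_trans hle ?_
  have hMpos : (0:ℝ) < C.card := by exact_mod_cast Finset.card_pos.mpr ⟨c, hc⟩
  have hbound : ∑ x ∈ C, ∑ y ∈ Finset.univ.filter (fun y => (fun _ => c) y ≠ x),
      bscProb n p x y ≤ (C.card : ℝ) := by
    calc ∑ x ∈ C, ∑ y ∈ Finset.univ.filter (fun y => (fun _ => c) y ≠ x), bscProb n p x y
        ≤ ∑ x ∈ C, (1:ℝ) := by
          apply Finset.sum_le_sum
          intro x _
          calc ∑ y ∈ Finset.univ.filter (fun y => (fun _ => c) y ≠ x), bscProb n p x y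
              ≤ ∑ y ∈ univ, bscProb n p x y :=
                Finset.sum_le_sum_of_subset_of_nonneg (Finset.filter_subset _ _)
                  (fun y _ _ => bscProb_nonneg hp0 hp1 x y)
            _ = 1 := sum_bscProb n p x
      _ = (C.card : ℝ) := by simp
  rw [inv_mul_le_iff₀ hMpos]
  simpa using hbound

lemma PeCode_lower (r : ℕ) (hr0 : 0 < r) (hrn : r ≤ n)
    (hp0 : 0 < p) (hp1 : p < 1) (hC : C.Nonempty)
    (hbig : 4 * ((2^n : ℝ) / C.card) ≤ (n.choose r : ℝ)) :
    (n.choose r : ℝ) * (p^r * (1-p)^(n-r)) / 4 ≤ PeCode n p C := by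
  apply le_csInf (PeCode_set_nonempty hC)
  rintro e ⟨dec, hdec, rfl⟩
  set M : ℝ := (C.card : ℝ) with hM
  have hMpos : (0:ℝ) < M := by
    rw [hM]
    exact_mod_cast Finset.card_pos.mpr hC
  set q : ℝ := p^r * (1-p)^(n-r) with hq
  have hqpos : 0 < q := by
    have : (0:ℝ) < 1 - p := by linarith
    positivity
  set t : ℝ := 2 * (2^n : ℝ) / M with ht
  have htpos : 0 < t := by positivity
  -- fibers
  set Dc : (Fin n → Bool) → ℕ := fun x => (univ.filter fun y => dec y = x).card with hDc
  have hfib : ∑ x ∈ C, (Dc x : ℝ) = (2^n : ℝ) := by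
    have h1 := Finset.card_eq_sum_card_fiberwise (f := dec) (s := univ) (t := C) (fun y _ => hdec y)
    have hcu : (univ : Finset (Fin n → Bool)).card = 2^n := by
      simp [Finset.card_univ]
    have hnat : ∑ x ∈ C, Dc x = 2^n := by rw [← h1, hcu]
    exact_mod_cast hnat
  set S : Finset (Fin n → Bool) := C.filter (fun x => (Dc x : ℝ) ≤ t) with hS
  -- Markov: card S ≥ M/2
  have hScard : M / 2 ≤ (S.card : ℝ) := by
    set B : Finset (Fin n → Bool) := C.filter (fun x => ¬ (Dc x : ℝ) ≤ t) with hB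
    have hBbound : (B.card : ℝ) * t ≤ (2^n : ℝ) := by
      have h1 : ∀ x ∈ B, t ≤ (Dc x : ℝ) := by
        intro x hx
        simp only [hB, Finset.mem_filter] at hx
        linarith [hx.2]
      calc (B.card : ℝ) * t = B.card • t := by rw [nsmul_eq_mul]
        _ ≤ ∑ x ∈ B, (Dc x : ℝ) := Finset.card_nsmul_le_sum B _ t h1
        _ ≤ ∑ x ∈ C, (Dc x : ℝ) := by
            apply Finset.sum_le_sum_of_subset_of_nonneg (Finset.filter_subset _ _)
            intro x _ _
            positivity
        _ = (2^n : ℝ) := hfib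
    have hBcard : (B.card : ℝ) ≤ M / 2 := by
      rw [ht] at hBbound
      have h2n : (0:ℝ) < (2^n : ℝ) := by positivity
      have hcancel : 2*(2^n:ℝ)/M*M = 2*2^n := div_mul_cancel₀ _ (ne_of_gt hMpos)
      have h3 : (B.card : ℝ) * (2*2^n) ≤ 2^n * M := by
        calc (B.card : ℝ) * (2*2^n) = (B.card : ℝ) * (2*2^n/M) * M := by
              rw [mul_assoc, hcancel]
          _ ≤ 2^n * M := mul_le_mul_of_nonneg_right hBbound hMpos.le
      nlinarith [h3, h2n, hMpos]
    have hsum : (S.card : ℝ) + (B.card : ℝ) = M := by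
      have h4 := Finset.card_filter_add_card_filter_not
        (s := C) (p := fun x => (Dc x : ℝ) ≤ t)
      rw [hM]
      exact_mod_cast h4
    linarith
  -- per-codeword bound on S
  have hper : ∀ x ∈ S, ((n.choose r : ℝ) - t) * q ≤
      ∑ y ∈ Finset.univ.filter (fun y => dec y ≠ x), bscProb n p x y := by
    intro x hx
    simp only [hS, Finset.mem_filter] at hx
    set A : Finset (Fin n → Bool) :=
      (univ.filter fun y => hammingDist x y = r) \ (univ.filter fun y => dec y = x) with hA
    have hsub : A ⊆ Finset.univ.filter (fun y => dec y ≠ x) := by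
      intro y hy
      simp only [hA, Finset.mem_sdiff, Finset.mem_filter, Finset.mem_univ, true_and] at hy ⊢
      exact hy.2
    have hAcard : (n.choose r : ℝ) - t ≤ (A.card : ℝ) := by
      have hun : (univ.filter fun y : Fin n → Bool => hammingDist x y = r).card
          ≤ A.card + Dc x := by
        have : (univ.filter fun y : Fin n → Bool => hammingDist x y = r) ⊆
            A ∪ (univ.filter fun y => dec y = x) := by
          intro y hy
          rw [Finset.mem_union, hA, Finset.mem_sdiff]
          by_cases h : y ∈ univ.filter fun y => dec y = x
          · exact Or.inr h
          · exact Or.inl ⟨hy, h⟩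
        calc (univ.filter fun y : Fin n → Bool => hammingDist x y = r).card
            ≤ (A ∪ (univ.filter fun y => dec y = x)).card := Finset.card_le_card this
          _ ≤ A.card + Dc x := Finset.card_union_le _ _
      have := sphere_card n x r
      have hcast : (n.choose r : ℝ) ≤ (A.card : ℝ) + (Dc x : ℝ) := by
        rw [← this]
        exact_mod_cast hun
      linarith [hx.2]
    calc ((n.choose r : ℝ) - t) * q ≤ (A.card : ℝ) * q :=
          mul_le_mul_of_nonneg_right hAcard (le_of_lt hqpos)
      _ = ∑ y ∈ A, bscProb n p x y := by
          rw [Finset.sum_congr rfl (fun y hy => ?_), Finset.sum_const, nsmul_eq_mul]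
          have : hammingDist x y = r := by
            simp only [hA, Finset.mem_sdiff, Finset.mem_filter, Finset.mem_univ, true_and] at hy
            exact hy.1
          unfold bscProb
          rw [this]
      _ ≤ ∑ y ∈ Finset.univ.filter (fun y => dec y ≠ x), bscProb n p x y :=
          Finset.sum_le_sum_of_subset_of_nonneg hsub
            (fun y _ _ => bscProb_nonneg (le_of_lt hp0) (le_of_lt hp1) x y)
  -- assemble
  have hterm : (n.choose r : ℝ) / 2 * q ≤ ((n.choose r : ℝ) - t) * q := by
    apply mul_le_mul_of_nonneg_right _ (le_of_lt hqpos)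
    have h5 : t ≤ (n.choose r : ℝ) / 2 := by
      have h6 : t = 4*((2^n:ℝ)/M)/2 := by rw [ht]; ring
      rw [h6]
      linarith
    linarith
  have hsumS : (S.card : ℝ) * ((n.choose r : ℝ) / 2 * q) ≤
      ∑ x ∈ S, ∑ y ∈ Finset.univ.filter (fun y => dec y ≠ x), bscProb n p x y := by
    calc (S.card : ℝ) * ((n.choose r : ℝ) / 2 * q) = S.card • ((n.choose r : ℝ) / 2 * q) := by
          rw [nsmul_eq_mul]
      _ ≤ _ := Finset.card_nsmul_le_sum S _ _ (fun x hx => le_trans hterm (hper x hx))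
  have hsumC : ∑ x ∈ S, ∑ y ∈ Finset.univ.filter (fun y => dec y ≠ x), bscProb n p x y ≤
      ∑ x ∈ C, ∑ y ∈ Finset.univ.filter (fun y => dec y ≠ x), bscProb n p x y := by
    apply Finset.sum_le_sum_of_subset_of_nonneg (Finset.filter_subset _ _)
    intro x _ _
    exact Finset.sum_nonneg fun y _ => bscProb_nonneg (le_of_lt hp0) (le_of_lt hp1) x y
  have hchoose_nonneg : (0:ℝ) ≤ (n.choose r : ℝ) := by positivity
  have final : M / 2 * ((n.choose r : ℝ) / 2 * q) ≤
      ∑ x ∈ C, ∑ y ∈ Finset.univ.filter (fun y => dec y ≠ x), bscProb n p x y := by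
    have h0 : (0:ℝ) ≤ (n.choose r : ℝ) / 2 * q := by positivity
    calc M / 2 * ((n.choose r : ℝ) / 2 * q) ≤ (S.card : ℝ) * ((n.choose r : ℝ) / 2 * q) :=
          mul_le_mul_of_nonneg_right hScard h0
      _ ≤ _ := le_trans hsumS hsumC
  have hMinv : (0:ℝ) < M⁻¹ := by positivity
  calc (n.choose r : ℝ) * q / 4 = M⁻¹ * (M / 2 * ((n.choose r : ℝ) / 2 * q)) := by
        rw [show M⁻¹ * (M / 2 * ((n.choose r : ℝ) / 2 * q))
            = (M⁻¹ * M) * ((n.choose r : ℝ) * q / 4) from by ring,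
          inv_mul_cancel₀ (ne_of_gt hMpos), one_mul]
    _ ≤ M⁻¹ * ∑ x ∈ C, ∑ y ∈ Finset.univ.filter (fun y => dec y ≠ x), bscProb n p x y := by
        apply mul_le_mul_of_nonneg_left _ (le_of_lt hMinv)
        linarith [final]
end

lemma pow_le_binTerm' (n r : ℕ) (hr : 0 < r) (hrn : r < n) :
    n ^ n ≤ (n+1) * (n.choose r * r^r * (n-r)^(n-r)) := by
  simpa [binTerm] using pow_le_binTerm n r hr hrn

lemma exponent_bound (n r : ℕ) (hr0 : 0 < r) (hrn : r < n) {p : ℝ} (hp0 : 0 < p) (hp1 : p < 1) :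
    (n:ℝ)⁻¹ * Real.logb 2 (1 / ((n.choose r : ℝ) * (p^r*(1-p)^(n-r)) / 4))
      ≤ Real.logb 2 (4*(n+1)) / n - binEnt ((r:ℝ)/n) - ((r:ℝ)/n) * Real.logb 2 p
        - (1 - (r:ℝ)/n) * Real.logb 2 (1-p) := by
  have hn : (0:ℝ) < n := by exact_mod_cast hr0.trans hrn
  have hrp : (0:ℝ) < r := by exact_mod_cast hr0
  have hnr : (0:ℝ) < (n:ℝ) - r := by
    have : (r:ℝ) < n := by exact_mod_cast hrn
    linarith
  have h1p : (0:ℝ) < 1 - p := by linarith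
  have hc : (0:ℝ) < (n.choose r : ℝ) := by
    exact_mod_cast Nat.choose_pos (le_of_lt hrn)
  have hq : (0:ℝ) < p^r*(1-p)^(n-r) := by positivity
  -- atoms
  set a1 := Real.logb 2 p with ha1
  set a2 := Real.logb 2 (1-p) with ha2
  set a3 := Real.logb 2 (n.choose r : ℝ) with ha3
  set a4 := Real.logb 2 ((n:ℝ)+1) with ha4
  set a5 := Real.logb 2 (r:ℝ) with ha5
  set a6 := Real.logb 2 ((n:ℝ) - r) with ha6
  set a7 := Real.logb 2 (n:ℝ) with ha7
  -- A : value of logb (1/X)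
  have hA : Real.logb 2 (1 / ((n.choose r : ℝ) * (p^r*(1-p)^(n-r)) / 4))
      = Real.logb 2 4 - a3 - ((r:ℝ) * a1 + ((n:ℝ) - r) * a2) := by
    rw [one_div, Real.logb_inv, Real.logb_div (by positivity) (by norm_num),
      Real.logb_mul (ne_of_gt hc) (ne_of_gt hq),
      Real.logb_mul (by positivity) (by positivity),
      Real.logb_pow, Real.logb_pow]
    have hcast : ((n - r : ℕ) : ℝ) = (n:ℝ) - r := by
      rw [Nat.cast_sub (le_of_lt hrn)]
    rw [hcast]
    ring
  -- B : lower bound on a3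
  have hB : (n:ℝ) * a7 ≤ a4 + a3 + (r:ℝ) * a5 + ((n:ℝ) - r) * a6 := by
    have hcb : ((n:ℝ))^n ≤ ((n:ℝ)+1) * ((n.choose r : ℝ) * (r:ℝ)^r * ((n:ℝ) - r)^(n-r)) := by
      have := pow_le_binTerm' n r hr0 hrn
      have hcast : ((n - r : ℕ) : ℝ) = (n:ℝ) - r := by
        rw [Nat.cast_sub (le_of_lt hrn)]
      calc ((n:ℝ))^n = (((n^n : ℕ)):ℝ) := by push_cast; ring
        _ ≤ (((n+1) * (n.choose r * r^r * (n-r)^(n-r)) : ℕ) : ℝ) := by exact_mod_cast this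
        _ = ((n:ℝ)+1) * ((n.choose r : ℝ) * (r:ℝ)^r * ((n:ℝ) - r)^(n-r)) := by
            push_cast [hcast]
            ring
    have hlog := Real.logb_le_logb_of_le (b := 2) (by norm_num) (by positivity) hcb
    rw [Real.logb_pow] at hlog
    rw [Real.logb_mul (by positivity) (by positivity),
      Real.logb_mul (by positivity) (by positivity),
      Real.logb_mul (by positivity) (by positivity),
      Real.logb_pow, Real.logb_pow] at hlog
    have hcast : ((n - r : ℕ) : ℝ) = (n:ℝ) - r := by
      rw [Nat.cast_sub (le_of_lt hrn)]
    rw [hcast] at hlog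
    linarith [hlog]
  -- C : n * binEnt (r/n)
  have hC : (n:ℝ) * binEnt ((r:ℝ)/n) = (n:ℝ) * a7 - (r:ℝ) * a5 - ((n:ℝ) - r) * a6 := by
    unfold binEnt
    have h1 : Real.logb 2 ((r:ℝ)/n) = a5 - a7 := Real.logb_div (ne_of_gt hrp) (ne_of_gt hn)
    have h2 : 1 - (r:ℝ)/n = ((n:ℝ) - r)/n := by field_simp
    have h3 : Real.logb 2 (((n:ℝ) - r)/n) = a6 - a7 := Real.logb_div (ne_of_gt hnr) (ne_of_gt hn)
    rw [h1, h2, h3]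
    field_simp
    try ring
  -- final
  have h4 : Real.logb 2 (4*((n:ℝ)+1)) = Real.logb 2 4 + a4 :=
    Real.logb_mul (by norm_num) (by positivity)
  rw [inv_mul_le_iff₀ hn, hA]
  have hexp : (n:ℝ) * (Real.logb 2 (4*((n:ℝ)+1)) / n - binEnt ((r:ℝ)/n) - ((r:ℝ)/n) * a1
      - (1 - (r:ℝ)/n) * a2)
      = Real.logb 2 4 + a4 - ((n:ℝ) * binEnt ((r:ℝ)/n)) - (r:ℝ) * a1 - ((n:ℝ) - r) * a2 := by
    rw [h4]
    field_simp
    try ring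
  have hn4 : ((n:ℕ):ℝ)+1 = ((n+1:ℕ):ℝ) := by push_cast; ring
  rw [show ((n:ℝ)) * (Real.logb 2 (4*(↑n+1)) / ↑n - binEnt ((r:ℝ)/n) - ((r:ℝ)/n) * a1
      - (1 - (r:ℝ)/n) * a2) = (n:ℝ) * (Real.logb 2 (4*((n:ℝ)+1)) / n - binEnt ((r:ℝ)/n)
      - ((r:ℝ)/n) * a1 - (1 - (r:ℝ)/n) * a2) from by norm_num]
  rw [hexp, hC]
  linarith [hB]

lemma choose_logb_lower (n r : ℕ) (hr0 : 0 < r) (hrn : r < n) :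
    (n:ℝ) * binEnt ((r:ℝ)/n) - Real.logb 2 ((n:ℝ)+1) ≤ Real.logb 2 (n.choose r : ℝ) := by
  have hn : (0:ℝ) < n := by exact_mod_cast hr0.trans hrn
  have hrp : (0:ℝ) < r := by exact_mod_cast hr0
  have hnr : (0:ℝ) < (n:ℝ) - r := by
    have : (r:ℝ) < n := by exact_mod_cast hrn
    linarith
  have hc : (0:ℝ) < (n.choose r : ℝ) := by
    exact_mod_cast Nat.choose_pos (le_of_lt hrn)
  set a3 := Real.logb 2 (n.choose r : ℝ) with ha3
  set a4 := Real.logb 2 ((n:ℝ)+1) with ha4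
  set a5 := Real.logb 2 (r:ℝ) with ha5
  set a6 := Real.logb 2 ((n:ℝ) - r) with ha6
  set a7 := Real.logb 2 (n:ℝ) with ha7
  have hB : (n:ℝ) * a7 ≤ a4 + a3 + (r:ℝ) * a5 + ((n:ℝ) - r) * a6 := by
    have hcast : ((n - r : ℕ) : ℝ) = (n:ℝ) - r := by
      rw [Nat.cast_sub (le_of_lt hrn)]
    have hcb : ((n:ℝ))^n ≤ ((n:ℝ)+1) * ((n.choose r : ℝ) * (r:ℝ)^r * ((n:ℝ) - r)^(n-r)) := by
      have h0 := pow_le_binTerm' n r hr0 hrn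
      calc ((n:ℝ))^n = (((n^n : ℕ)):ℝ) := by push_cast; ring
        _ ≤ (((n+1) * (n.choose r * r^r * (n-r)^(n-r)) : ℕ) : ℝ) := by exact_mod_cast h0
        _ = ((n:ℝ)+1) * ((n.choose r : ℝ) * (r:ℝ)^r * ((n:ℝ) - r)^(n-r)) := by
            push_cast [hcast]
            ring
    have hlog := Real.logb_le_logb_of_le (b := 2) (by norm_num) (by positivity) hcb
    rw [Real.logb_pow] at hlog
    rw [Real.logb_mul (by positivity) (by positivity),
      Real.logb_mul (by positivity) (by positivity),
      Real.logb_mul (by positivity) (by positivity),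
      Real.logb_pow, Real.logb_pow, hcast] at hlog
    linarith [hlog]
  have hC : (n:ℝ) * binEnt ((r:ℝ)/n) = (n:ℝ) * a7 - (r:ℝ) * a5 - ((n:ℝ) - r) * a6 := by
    unfold binEnt
    have h1 : Real.logb 2 ((r:ℝ)/n) = a5 - a7 := Real.logb_div (ne_of_gt hrp) (ne_of_gt hn)
    have h2 : 1 - (r:ℝ)/n = ((n:ℝ) - r)/n := by field_simp
    have h3 : Real.logb 2 (((n:ℝ) - r)/n) = a6 - a7 := Real.logb_div (ne_of_gt hnr) (ne_of_gt hn)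
    rw [h1, h2, h3]
    field_simp
    try ring
  linarith [hB, hC]

lemma tendsto_logb_lin_div : Tendsto (fun n : ℕ => Real.logb 2 (4*((n:ℝ)+1)) / n) atTop (𝓝 0) := by
  have h1 : Tendsto (fun n : ℕ => (4*((n:ℝ)+1))) atTop atTop := by
    have h0 : Tendsto (fun n : ℕ => ((n:ℝ)+1)) atTop atTop :=
      tendsto_atTop_add_const_right atTop 1 tendsto_natCast_atTop_atTop
    exact h0.const_mul_atTop (by norm_num)
  have h2 := Real.isLittleO_log_id_atTop.comp_tendsto h1
  have hbig : (fun n : ℕ => 4*((n:ℝ)+1)) =O[atTop] (fun n : ℕ => (n:ℝ)) := by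
    apply Asymptotics.IsBigO.of_bound 8
    filter_upwards [eventually_ge_atTop 1] with n hn
    have h1n : (1:ℝ) ≤ (n:ℝ) := by exact_mod_cast hn
    rw [Real.norm_eq_abs, Real.norm_eq_abs, abs_of_nonneg (by linarith), abs_of_nonneg (by linarith)]
    linarith
  have hlo := h2.trans_isBigO hbig
  have ht := hlo.tendsto_div_nhds_zero
  have heq : (fun n : ℕ => Real.logb 2 (4*((n:ℝ)+1)) / n)
      = fun n : ℕ => (Real.log (4*((n:ℝ)+1)) / (n:ℝ)) * (Real.log 2)⁻¹ := by
    funext n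
    rw [Real.logb]
    ring
  rw [heq]
  have := ht.mul_const (Real.log 2)⁻¹
  simpa using this

lemma per_n_bound (p R δpar δ' ε : ℝ) (hp0 : 0 < p) (hp : p < 1/2)
    (hR0 : 0 < R) (hR1 : R < 1)
    (hδ'0 : 0 < δ') (hδ'half : δ' < 1/2)
    (hKL : binKL δ' p ≤ binKL δpar p + ε/2)
    (n : ℕ) (hn1 : 1 ≤ n)
    (hnδ : 2/(1-2*δ') ≤ (n:ℝ))
    (hE3 : Real.logb 2 (4*((n:ℝ)+1)) ≤ (n:ℝ) * (binEnt δ' - (1 - R)))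
    (hE4 : Real.logb 2 (4*((n:ℝ)+1))/(n:ℝ) + (-Real.logb 2 p)/(n:ℝ) ≤ ε/2) :
    0 ≤ sSup {e : ℝ | ∃ C : Finset (Fin n → Bool),
        (2 : ℝ) ^ (R * n) ≤ (C.card : ℝ) ∧
        e = (n : ℝ)⁻¹ * Real.logb 2 (1 / PeCode n p C)} ∧
    sSup {e : ℝ | ∃ C : Finset (Fin n → Bool),
        (2 : ℝ) ^ (R * n) ≤ (C.card : ℝ) ∧
        e = (n : ℝ)⁻¹ * Real.logb 2 (1 / PeCode n p C)} ≤ binKL δpar p + ε := by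
  have hp1 : p < 1 := by linarith
  have hnpos : (0:ℝ) < n := by exact_mod_cast hn1
  have hhalf : (0:ℝ) < 1 - 2*δ' := by linarith
  -- the radius
  set r : ℕ := ⌈(n:ℝ)*δ'⌉₊ with hrdef
  have hr0 : 0 < r := Nat.ceil_pos.mpr (by positivity)
  have hrp : (0:ℝ) < r := by exact_mod_cast hr0
  have hrlow : (n:ℝ)*δ' ≤ r := Nat.le_ceil _
  have hrup : (r:ℝ) ≤ (n:ℝ)*δ' + 1 := le_of_lt (Nat.ceil_lt_add_one (by positivity))
  have hn2 : (2:ℝ) ≤ (n:ℝ)*(1-2*δ') := (div_le_iff₀ hhalf).mp hnδ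
  have h2r : 2*(r:ℝ) ≤ n := by nlinarith [hrup, hn2]
  have hrnR : (r:ℝ) < n := by linarith
  have hrn : r < n := by exact_mod_cast hrnR
  have hrhalf : (r:ℝ)/n ≤ 1/2 := by
    rw [div_le_iff₀ hnpos]
    linarith
  have hrnlow : δ' ≤ (r:ℝ)/n := by
    rw [le_div_iff₀ hnpos]
    linarith [hrlow]
  have hrnup : (r:ℝ)/n ≤ δ' + 1/n := by
    rw [div_le_iff₀ hnpos]
    have : (δ' + 1/(n:ℝ)) * n = (n:ℝ)*δ' + 1 := by field_simp
    rw [this]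
    exact hrup
  have hmono : binEnt δ' ≤ binEnt ((r:ℝ)/n) := by
    rcases eq_or_lt_of_le hrnlow with h | h
    · rw [h]
    · exact le_of_lt (binEnt_strictMonoOn ⟨le_of_lt hδ'0, le_of_lt hδ'half⟩
        ⟨by positivity, hrhalf⟩ h)
  have ha1 : Real.logb 2 p < 0 := Real.logb_neg one_lt_two hp0 hp1
  have ha2 : Real.logb 2 (1-p) < 0 := Real.logb_neg one_lt_two (by linarith) (by linarith)
  -- per-code bound
  have hcode : ∀ C : Finset (Fin n → Bool), (2 : ℝ) ^ (R * (n:ℝ)) ≤ (C.card : ℝ) →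
      0 ≤ (n : ℝ)⁻¹ * Real.logb 2 (1 / PeCode n p C) ∧
      (n : ℝ)⁻¹ * Real.logb 2 (1 / PeCode n p C) ≤ binKL δpar p + ε := by
    intro C hM
    have hMpos : (0:ℝ) < C.card := lt_of_lt_of_le (Real.rpow_pos_of_pos two_pos _) hM
    have hCne : C.Nonempty := Finset.card_pos.mp (by exact_mod_cast hMpos)
    -- hbig
    have hbig : 4 * ((2^n : ℝ) / C.card) ≤ (n.choose r : ℝ) := by
      have hLpos : (0:ℝ) < 4 * ((2^n : ℝ) / C.card) := by positivity
      have hcpos : (0:ℝ) < (n.choose r : ℝ) := by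
        exact_mod_cast Nat.choose_pos (le_of_lt hrn)
      refine (Real.logb_le_logb (b := 2) one_lt_two hLpos hcpos).mp ?_
      have hlogM : R * (n:ℝ) ≤ Real.logb 2 (C.card : ℝ) := by
        have := Real.logb_le_logb_of_le (b := 2) (by norm_num)
          (Real.rpow_pos_of_pos two_pos _) hM
        rwa [Real.logb_rpow (by norm_num) (by norm_num)] at this
      have hlogL : Real.logb 2 (4 * ((2^n : ℝ) / C.card))
          = 2 + (n:ℝ) - Real.logb 2 (C.card : ℝ) := by
        rw [Real.logb_mul (by norm_num) (by positivity),
          Real.logb_div (by positivity) (ne_of_gt hMpos)]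
        have h4 : Real.logb 2 (4:ℝ) = 2 := by
          rw [show (4:ℝ) = 2^(2:ℕ) by norm_num, Real.logb_pow,
            Real.logb_self_eq_one (by norm_num)]
          norm_num
        have h2n : Real.logb 2 ((2:ℝ)^n) = (n:ℝ) := by
          rw [Real.logb_pow, Real.logb_self_eq_one (by norm_num)]
          norm_num
        rw [h4, h2n]
        ring
      have hcl := choose_logb_lower n r hr0 hrn
      have hEnt : (n:ℝ) * binEnt δ' ≤ (n:ℝ) * binEnt ((r:ℝ)/n) :=
        mul_le_mul_of_nonneg_left hmono (le_of_lt hnpos)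
      have h44 : Real.logb 2 (4*((n:ℝ)+1)) = 2 + Real.logb 2 ((n:ℝ)+1) := by
        rw [Real.logb_mul (by norm_num) (by positivity)]
        have h4 : Real.logb 2 (4:ℝ) = 2 := by
          rw [show (4:ℝ) = 2^(2:ℕ) by norm_num, Real.logb_pow,
            Real.logb_self_eq_one (by norm_num)]
          norm_num
        rw [h4]
      rw [hlogL]
      have hexpand : (n:ℝ) * (binEnt δ' - (1 - R)) = (n:ℝ)*binEnt δ' - (n:ℝ) + R*(n:ℝ) := by
        ring
      rw [h44, hexpand] at hE3
      linarith [hE3, hcl, hEnt, hlogM]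
    -- PeCode bounds
    have hPelow := PeCode_lower r hr0 (le_of_lt hrn) hp0 hp1 hCne hbig
    have hPele1 := PeCode_le_one (le_of_lt hp0) (le_of_lt hp1) hCne
    have hcpos : (0:ℝ) < (n.choose r : ℝ) := by
      exact_mod_cast Nat.choose_pos (le_of_lt hrn)
    have hBpos : (0:ℝ) < (n.choose r : ℝ) * (p^r * (1-p)^(n-r)) / 4 := by
      have h1p : (0:ℝ) < 1 - p := by linarith
      positivity
    have hPepos : (0:ℝ) < PeCode n p C := lt_of_lt_of_le hBpos hPelow
    constructor
    · apply mul_nonneg (by positivity)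
      apply Real.logb_nonneg (by norm_num)
      rw [le_div_iff₀ hPepos, one_mul]
      exact hPele1
    · have h1div : 1 / PeCode n p C ≤ 1 / ((n.choose r : ℝ) * (p^r * (1-p)^(n-r)) / 4) :=
        one_div_le_one_div_of_le hBpos hPelow
      have hlog : Real.logb 2 (1 / PeCode n p C)
          ≤ Real.logb 2 (1 / ((n.choose r : ℝ) * (p^r * (1-p)^(n-r)) / 4)) :=
        Real.logb_le_logb_of_le (by norm_num) (by positivity) h1div
      have hmul : (n : ℝ)⁻¹ * Real.logb 2 (1 / PeCode n p C)
          ≤ (n:ℝ)⁻¹ * Real.logb 2 (1 / ((n.choose r : ℝ) * (p^r * (1-p)^(n-r)) / 4)) :=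
        mul_le_mul_of_nonneg_left hlog (by positivity)
      have hexp := exponent_bound n r hr0 hrn hp0 hp1
      -- compare to binKL δ' p
      have hKLexpr := binKL_expr hδ'0 (by linarith : δ' < 1) hp0 hp1
      have hc1 : -binEnt ((r:ℝ)/n) ≤ -binEnt δ' := by linarith
      have hc2 : -((r:ℝ)/n) * Real.logb 2 p
          ≤ -δ' * Real.logb 2 p + (-Real.logb 2 p)/(n:ℝ) := by
        have hprod : 0 ≤ (δ' + 1/(n:ℝ) - (r:ℝ)/n) * (-Real.logb 2 p) :=
          mul_nonneg (by linarith) (by linarith)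
        have hd : (-Real.logb 2 p)/(n:ℝ) = (1/(n:ℝ)) * (-Real.logb 2 p) := by ring
        rw [hd]
        nlinarith [hprod]
      have hc3 : -(1 - (r:ℝ)/n) * Real.logb 2 (1-p) ≤ -(1 - δ') * Real.logb 2 (1-p) := by
        have hprod : 0 ≤ ((r:ℝ)/n - δ') * (-Real.logb 2 (1-p)) :=
          mul_nonneg (by linarith) (by linarith)
        nlinarith [hprod]
      calc (n : ℝ)⁻¹ * Real.logb 2 (1 / PeCode n p C)
          ≤ (n:ℝ)⁻¹ * Real.logb 2 (1 / ((n.choose r : ℝ) * (p^r * (1-p)^(n-r)) / 4)) := hmul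
        _ ≤ Real.logb 2 (4*((n:ℝ)+1)) / n - binEnt ((r:ℝ)/n) - ((r:ℝ)/n) * Real.logb 2 p
            - (1 - (r:ℝ)/n) * Real.logb 2 (1-p) := by
            have := hexp
            push_cast at this ⊢
            linarith [this]
        _ ≤ binKL δ' p + (Real.logb 2 (4*((n:ℝ)+1))/(n:ℝ) + (-Real.logb 2 p)/(n:ℝ)) := by
            rw [hKLexpr]
            nlinarith [hc1, hc2, hc3]
        _ ≤ binKL δ' p + ε/2 := by linarith [hE4]
        _ ≤ binKL δpar p + ε := by linarith [hKL]
  -- the set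
  set Sset := {e : ℝ | ∃ C : Finset (Fin n → Bool),
      (2 : ℝ) ^ (R * n) ≤ (C.card : ℝ) ∧
      e = (n : ℝ)⁻¹ * Real.logb 2 (1 / PeCode n p C)} with hSset
  have hcard_univ : ((univ : Finset (Fin n → Bool)).card : ℝ) = (2:ℝ)^n := by
    rw [Finset.card_univ]
    simp [Fintype.card_fun]
  have huniv_mem : ((n : ℝ)⁻¹ * Real.logb 2 (1 / PeCode n p (univ : Finset (Fin n → Bool)))) ∈ Sset := by
    refine ⟨univ, ?_, rfl⟩
    rw [hcard_univ]
    calc (2:ℝ) ^ (R * (n:ℝ)) ≤ (2:ℝ) ^ ((n:ℝ)) :=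
          Real.rpow_le_rpow_of_exponent_le one_le_two (by nlinarith)
      _ = (2:ℝ)^n := Real.rpow_natCast 2 n
  have hub : ∀ e ∈ Sset, e ≤ binKL δpar p + ε := by
    rintro e ⟨C, hC, rfl⟩
    exact (hcode C hC).2
  have hne : Sset.Nonempty := ⟨_, huniv_mem⟩
  constructor
  · have h0 : 0 ≤ (n : ℝ)⁻¹ * Real.logb 2 (1 / PeCode n p (univ : Finset (Fin n → Bool))) := by
      apply (hcode univ _).1
      rw [hcard_univ]
      calc (2:ℝ) ^ (R * (n:ℝ)) ≤ (2:ℝ) ^ ((n:ℝ)) :=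
            Real.rpow_le_rpow_of_exponent_le one_le_two (by nlinarith)
        _ = (2:ℝ)^n := Real.rpow_natCast 2 n
    exact le_trans h0 (le_csSup ⟨binKL δpar p + ε, hub⟩ huniv_mem)
  · exact csSup_le hne hub

/-- **The sphere-packing upper bound on the reliability function of the BSC**:
for every rate `R ∈ (0, 1 − h(p))`, `E(R,p) ≤ D(δ_GV(R)‖p)`. -/
theorem sphere_packing_bound
    (p : ℝ) (hp0 : 0 < p) (hp : p < 1 / 2)
    (R : ℝ) (hR0 : 0 < R) (hR1 : R < 1 - binEnt p) :
    reliability p R ≤ binKL (deltaGV R) p := by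
  have hp1 : p < 1 := by linarith
  have hbp : 0 < binEnt p := binEnt_pos hp0 hp1
  have hR1' : R < 1 := by linarith
  obtain ⟨hδmem, hδval⟩ := deltaGV_spec hR0 hR1'
  set δ := deltaGV R with hδdef
  have hpmem : p ∈ Set.Icc (0:ℝ) (1/2) := ⟨le_of_lt hp0, le_of_lt hp⟩
  have hpδ : p < δ := by
    by_contra hcon
    push_neg at hcon
    have hle : binEnt δ ≤ binEnt p := binEnt_strictMonoOn.monotoneOn hδmem hpmem hcon
    rw [hδval] at hle
    linarith
  have hδ0 : 0 < δ := lt_trans hp0 hpδ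
  have hδhalf : δ < 1/2 := by
    rcases lt_or_eq_of_le hδmem.2 with h | h
    · exact h
    · exfalso
      have h1 : binEnt δ = 1 := by rw [h]; exact binEnt_half
      rw [hδval] at h1
      linarith
  suffices hsuff : ∀ ε : ℝ, 0 < ε → reliability p R ≤ binKL δ p + ε by
    by_contra hcon
    push_neg at hcon
    have h2 := hsuff ((reliability p R - binKL δ p)/2) (by linarith)
    linarith
  intro ε hε
  -- find δ'
  have hcont : ContinuousAt (fun t => binKL t p) δ :=
    binKL_continuousAt hp0 hp1 hδ0 (by linarith)
  have h1 : ∀ᶠ x in 𝓝 δ, binKL x p < binKL δ p + ε/2 :=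
    hcont.eventually_lt_const (by linarith)
  have h1' : ∀ᶠ x in 𝓝[>] δ, binKL x p < binKL δ p + ε/2 := h1.filter_mono nhdsWithin_le_nhds
  have h2 : ∀ᶠ x in 𝓝[>] δ, x < 1/2 :=
    (eventually_lt_nhds hδhalf).filter_mono nhdsWithin_le_nhds
  have h3 : ∀ᶠ x in 𝓝[>] δ, δ < x := eventually_mem_nhdsWithin
  obtain ⟨δ', hKL', hhalf', hlt'⟩ := (h1'.and (h2.and h3)).exists
  have hδ'0 : 0 < δ' := lt_trans hδ0 hlt'
  have hδ'half : δ' < 1/2 := hhalf'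
  have hγpos : 0 < binEnt δ' - (1 - R) := by
    have hlt : binEnt δ < binEnt δ' :=
      binEnt_strictMonoOn ⟨hδmem.1, hδmem.2⟩ ⟨le_of_lt hδ'0, le_of_lt hδ'half⟩ hlt'
    rw [hδval] at hlt
    linarith
  -- eventualities
  have hT := tendsto_logb_lin_div
  have hE3ev : ∀ᶠ n : ℕ in atTop,
      Real.logb 2 (4*((n:ℝ)+1)) ≤ (n:ℝ) * (binEnt δ' - (1 - R)) := by
    filter_upwards [hT.eventually_lt_const hγpos, eventually_ge_atTop 1] with n hn h1n
    have hnpos : (0:ℝ) < n := by exact_mod_cast h1n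
    calc Real.logb 2 (4*((n:ℝ)+1)) = (Real.logb 2 (4*((n:ℝ)+1)) / n) * n := by
          field_simp
      _ ≤ (binEnt δ' - (1 - R)) * n := mul_le_mul_of_nonneg_right (le_of_lt hn) hnpos.le
      _ = (n:ℝ) * (binEnt δ' - (1 - R)) := mul_comm _ _
  have hE4ev : ∀ᶠ n : ℕ in atTop,
      Real.logb 2 (4*((n:ℝ)+1))/(n:ℝ) + (-Real.logb 2 p)/(n:ℝ) ≤ ε/2 := by
    have hT2 : Tendsto (fun n : ℕ => (-Real.logb 2 p)/(n:ℝ)) atTop (𝓝 0) :=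
      tendsto_const_div_atTop_nhds_zero_nat _
    have hadd := hT.add hT2
    rw [add_zero] at hadd
    exact hadd.eventually_le_const (by linarith)
  have hE2ev : ∀ᶠ n : ℕ in atTop, 2/(1-2*δ') ≤ (n:ℝ) :=
    tendsto_natCast_atTop_atTop.eventually_ge_atTop _
  have hE1ev : ∀ᶠ n : ℕ in atTop, 1 ≤ n := eventually_ge_atTop 1
  have hmain : ∀ᶠ n : ℕ in atTop,
      0 ≤ sSup {e : ℝ | ∃ C : Finset (Fin n → Bool),
        (2 : ℝ) ^ (R * n) ≤ (C.card : ℝ) ∧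
        e = (n : ℝ)⁻¹ * Real.logb 2 (1 / PeCode n p C)} ∧
      sSup {e : ℝ | ∃ C : Finset (Fin n → Bool),
        (2 : ℝ) ^ (R * n) ≤ (C.card : ℝ) ∧
        e = (n : ℝ)⁻¹ * Real.logb 2 (1 / PeCode n p C)} ≤ binKL δ p + ε := by
    filter_upwards [hE1ev, hE2ev, hE3ev, hE4ev] with n h1n h2n h3n h4n
    exact per_n_bound p R δ δ' ε hp0 hp hR0 hR1' hδ'0 hδ'half (le_of_lt hKL') n h1n h2n h3n h4n
  -- limsup
  unfold reliability
  rw [Filter.limsup_eq]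
  apply csInf_le
  · refine ⟨0, fun a ha => ?_⟩
    obtain ⟨n, hn1, hn2⟩ := (hmain.and ha).exists
    exact le_trans hn1.1 hn2
  · exact hmain.mono (fun n h => h.2)
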